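/- arXiv:1102.4177 — 4 statements merged into one kernel-verified Lean document; each statement's English description precedes it below -/
import Mathlib

section
/- The cactus pseudo-distance on a pointed connected finite graph satisfies the triangle inequality: for all vertices v, v', v'', d_Cac(v, v'') ≤ d_Cac(v, v') + d_Cac(v', v''). -/
/-!
Concatenating a walk from `v` to `v'` with one from `v'` to `v''` shows that the max-min of
`(v, v'')` is at least the smaller of the max-mins of `(v, v')` and `(v', v'')`; since a max-min
never exceeds the distances of its endpoints to `ρ`, the triangle inequality is then arithmetic.
-/

open SimpleGraph

/-- The maximum over all paths from `v` to `v'` of the minimum over vertices `a` on the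
path of the graph distance `d_gr(ρ, a)`. -/
noncomputable def cacMaxMin {V : Type*} (G : SimpleGraph V) (ρ v v' : V) : ℕ :=
  sSup {m : ℕ | ∃ w : G.Walk v v', ∀ a ∈ w.support, m ≤ G.dist ρ a}

/-- The cactus pseudo-distance of the pointed graph `(G, ρ)`. -/
noncomputable def dCac {V : Type*} (G : SimpleGraph V) (ρ v v' : V) : ℕ :=
  G.dist ρ v + G.dist ρ v' - 2 * cacMaxMin G ρ v v'

namespace SimpleGraph

variable {V : Type*} (G : SimpleGraph V) (ρ : V)

lemma bddAbove_setOf_le_dist_walk_support (u v : V) :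
    BddAbove {m : ℕ | ∃ p : G.Walk u v, ∀ a ∈ p.support, m ≤ G.dist ρ a} :=
  ⟨G.dist ρ u, fun _ ⟨p, hp⟩ => hp u p.start_mem_support⟩

lemma cacMaxMin_le_dist_left (u v : V) : cacMaxMin G ρ u v ≤ G.dist ρ u :=
  csSup_le' fun _ ⟨p, hp⟩ => hp u p.start_mem_support

lemma cacMaxMin_le_dist_right (u v : V) : cacMaxMin G ρ u v ≤ G.dist ρ v :=
  csSup_le' fun _ ⟨p, hp⟩ => hp v p.end_mem_support

variable {G} {u v w : V}

lemma Reachable.exists_walk_cacMaxMin_le_dist (h : G.Reachable u v) :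
    ∃ p : G.Walk u v, ∀ a ∈ p.support, cacMaxMin G ρ u v ≤ G.dist ρ a :=
  Nat.sSup_mem (s := {m : ℕ | ∃ p : G.Walk u v, ∀ a ∈ p.support, m ≤ G.dist ρ a})
    ⟨0, h.some, fun _ _ => Nat.zero_le _⟩ (bddAbove_setOf_le_dist_walk_support G ρ u v)

lemma Reachable.min_cacMaxMin_le (huv : G.Reachable u v) (hvw : G.Reachable v w) :
    min (cacMaxMin G ρ u v) (cacMaxMin G ρ v w) ≤ cacMaxMin G ρ u w := by
  obtain ⟨p, hp⟩ := huv.exists_walk_cacMaxMin_le_dist ρ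
  obtain ⟨q, hq⟩ := hvw.exists_walk_cacMaxMin_le_dist ρ
  refine le_csSup (bddAbove_setOf_le_dist_walk_support G ρ u w) ⟨p.append q, fun a ha => ?_⟩
  rcases Walk.mem_support_append_iff p q |>.mp ha with ha | ha
  · exact (min_le_left _ _).trans (hp a ha)
  · exact (min_le_right _ _).trans (hq a ha)

end SimpleGraph

theorem stmt0_general {V : Type*} (G : SimpleGraph V) (hG : G.Connected)
    (ρ v v' v'' : V) :
    dCac G ρ v v'' ≤ dCac G ρ v v' + dCac G ρ v' v'' := by
  have hmin := (hG.preconnected v v').min_cacMaxMin_le ρ (hG.preconnected v' v'')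
  have := cacMaxMin_le_dist_left G ρ v v'
  have := cacMaxMin_le_dist_right G ρ v v'
  have := cacMaxMin_le_dist_left G ρ v' v''
  have := cacMaxMin_le_dist_right G ρ v' v''
  unfold dCac
  omega

/-- The cactus pseudo-distance satisfies the triangle inequality. -/
theorem stmt0 {V : Type*} [Fintype V] (G : SimpleGraph V) (hG : G.Connected)
    (ρ v v' v'' : V) :
    dCac G ρ v v'' ≤ dCac G ρ v v' + dCac G ρ v' v'' :=
  stmt0_general G hG ρ v v' v''
end

section
/- The continuous cactus pseudo-distance on a pointed compact geodesic metric space satisfies the triangle inequality and for all a, b: d_Kac(a, b) ≤ d(a, b) and d_Kac(ρ, a) = d(ρ, a). -/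
/-- `E` is a geodesic space: any two points are joined by an isometric path. -/
def IsGeodesicSpace (E : Type*) [MetricSpace E] : Prop :=
  ∀ a b : E, ∃ γ : ℝ → E, γ 0 = a ∧ γ (dist a b) = b ∧
    ∀ s ∈ Set.Icc (0 : ℝ) (dist a b), ∀ t ∈ Set.Icc (0 : ℝ) (dist a b),
      dist (γ s) (γ t) = |s - t|

/-- The continuous cactus pseudo-distance associated with the pointed space `(E, ρ)`:
`d_Kac(a, b) = d(ρ,a) + d(ρ,b) - 2 sup_γ inf_t d(ρ, γ(t))`, the supremum being over all
continuous curves `γ : [0,1] → E` from `a` to `b`. -/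
noncomputable def dKac {E : Type*} [MetricSpace E] (ρ a b : E) : ℝ :=
  dist ρ a + dist ρ b -
    2 * sSup {m : ℝ | ∃ γ : ℝ → E, ContinuousOn γ (Set.Icc 0 1) ∧ γ 0 = a ∧ γ 1 = b ∧
      m = ⨅ t : Set.Icc (0 : ℝ) 1, dist ρ (γ t)}

/-!
Every point `x` of a geodesic from `a` to `b` satisfies
`2 d(ρ, x) ≥ d(ρ, a) + d(ρ, b) - d(a, b)` by the triangle inequality, which gives `d_Kac ≤ d`.
Concatenating curves from `a` to `b` and from `b` to `c` gives a curve from `a` to `c` whose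
minimal distance to `ρ` is the smaller of the two minima `m₁, m₂`; both are at most `d(ρ, b)`, so
`m₁ + m₂ ≤ d(ρ, b) + min m₁ m₂`, which is the triangle inequality. A curve starting at `ρ` has
minimum `0`, so `d_Kac(ρ, a) = d(ρ, a)`.
-/

section

open Set

variable {E : Type*} [MetricSpace E]

lemma add_dist_sub_dist_le_two_mul_dist_of_dist_add_dist_eq {ρ a b x : E}
    (hx : dist a x + dist x b = dist a b) :
    dist ρ a + dist ρ b - dist a b ≤ 2 * dist ρ x := by
  linarith [dist_triangle ρ x a, dist_triangle ρ x b, dist_comm x a]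

lemma IsGeodesicSpace.exists_path_dist_add_dist_eq (hgeo : IsGeodesicSpace E) (a b : E) :
    ∃ p : Path a b, ∀ t, dist a (p t) + dist (p t) b = dist a b := by
  obtain ⟨γ, hγ0, hγL, hiso⟩ := hgeo a b
  set L := dist a b
  have hL : 0 ≤ L := dist_nonneg
  have hmem : ∀ t : unitInterval, (t : ℝ) * L ∈ Icc 0 L := fun t =>
    ⟨mul_nonneg t.2.1 hL, mul_le_of_le_one_left hL t.2.2⟩
  have hlip : LipschitzWith (Real.toNNReal L) fun t : unitInterval => γ (t * L) := by
    refine LipschitzWith.of_dist_le_mul fun s t => ?_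
    rw [hiso _ (hmem s) _ (hmem t), Real.coe_toNNReal _ hL, Subtype.dist_eq, Real.dist_eq,
      ← sub_mul, abs_mul, abs_of_nonneg hL, mul_comm]
  refine ⟨⟨⟨fun t => γ (t * L), hlip.continuous⟩, by simp [hγ0], by simp [hγL]⟩, fun t => ?_⟩
  have h0 : (0 : ℝ) ∈ Icc 0 L := ⟨le_rfl, hL⟩
  have hL' : L ∈ Icc 0 L := ⟨hL, le_rfl⟩
  change dist a (γ (t * L)) + dist (γ (t * L)) b = L
  conv_lhs => rw [← hγ0, ← hγL, hiso _ h0 _ (hmem t), hiso _ (hmem t) _ hL']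
  rw [abs_of_nonpos (by linarith [(hmem t).1]), abs_of_nonpos (by linarith [(hmem t).2])]
  ring

lemma bddBelow_range_dist {ι : Sort*} (ρ : E) (f : ι → E) :
    BddBelow (range fun i => dist ρ (f i)) :=
  ⟨0, by rintro _ ⟨i, rfl⟩; exact dist_nonneg⟩

lemma Path.iInf_dist_le_left (ρ : E) {a b : E} (p : Path a b) :
    ⨅ t, dist ρ (p t) ≤ dist ρ a := by
  simpa using ciInf_le (bddBelow_range_dist ρ p) (0 : unitInterval)

lemma Path.iInf_dist_le_right (ρ : E) {a b : E} (p : Path a b) :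
    ⨅ t, dist ρ (p t) ≤ dist ρ b := by
  simpa using ciInf_le (bddBelow_range_dist ρ p) (1 : unitInterval)

lemma Path.iInf_dist_eq_sInf_image_range (ρ : E) {a b : E} (p : Path a b) :
    ⨅ t, dist ρ (p t) = sInf (dist ρ '' range p) := by
  rw [← range_comp, sInf_range]
  rfl

lemma Path.iInf_dist_trans (ρ : E) {a b c : E} (p : Path a b) (q : Path b c) :
    ⨅ t, dist ρ (p.trans q t) = min (⨅ t, dist ρ (p t)) (⨅ t, dist ρ (q t)) := by
  have hbdd : ∀ s : Set E, BddBelow (dist ρ '' s) := fun s =>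
    ⟨0, by rintro _ ⟨_, -, rfl⟩; exact dist_nonneg⟩
  simp only [Path.iInf_dist_eq_sInf_image_range, Path.trans_range, image_union]
  exact csInf_union (hbdd _) ((range_nonempty _).image _) (hbdd _) ((range_nonempty _).image _)

def curveMinDists (ρ a b : E) : Set ℝ :=
  {m : ℝ | ∃ γ : ℝ → E, ContinuousOn γ (Icc 0 1) ∧ γ 0 = a ∧ γ 1 = b ∧
    m = ⨅ t : Icc (0 : ℝ) 1, dist ρ (γ t)}

lemma dKac_eq (ρ a b : E) :
    dKac ρ a b = dist ρ a + dist ρ b - 2 * sSup (curveMinDists ρ a b) := rfl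

lemma mem_curveMinDists_iff {ρ a b : E} {m : ℝ} :
    m ∈ curveMinDists ρ a b ↔ ∃ p : Path a b, m = ⨅ t, dist ρ (p t) := by
  constructor
  · rintro ⟨γ, hγ, hγ0, hγ1, rfl⟩
    exact ⟨⟨⟨fun t => γ t, continuousOn_iff_continuous_domRestrict.mp hγ⟩, hγ0, hγ1⟩, rfl⟩
  · rintro ⟨p, rfl⟩
    exact ⟨p.extend, p.continuous_extend.continuousOn, p.extend_zero, p.extend_one,
      iInf_congr fun t => by rw [p.extend_extends']⟩

namespace curveMinDists

variable {ρ a b c : E}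

lemma le_dist_left {m : ℝ} (hm : m ∈ curveMinDists ρ a b) : m ≤ dist ρ a := by
  obtain ⟨p, rfl⟩ := mem_curveMinDists_iff.mp hm
  exact p.iInf_dist_le_left ρ

lemma le_dist_right {m : ℝ} (hm : m ∈ curveMinDists ρ a b) : m ≤ dist ρ b := by
  obtain ⟨p, rfl⟩ := mem_curveMinDists_iff.mp hm
  exact p.iInf_dist_le_right ρ

lemma nonneg {m : ℝ} (hm : m ∈ curveMinDists ρ a b) : 0 ≤ m := by
  obtain ⟨p, rfl⟩ := mem_curveMinDists_iff.mp hm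
  exact le_ciInf fun _ => dist_nonneg

lemma bddAbove (ρ a b : E) : BddAbove (curveMinDists ρ a b) :=
  ⟨dist ρ a, fun _ => le_dist_left⟩

lemma min_mem {m₁ m₂ : ℝ} (h₁ : m₁ ∈ curveMinDists ρ a b) (h₂ : m₂ ∈ curveMinDists ρ b c) :
    min m₁ m₂ ∈ curveMinDists ρ a c := by
  obtain ⟨p, rfl⟩ := mem_curveMinDists_iff.mp h₁
  obtain ⟨q, rfl⟩ := mem_curveMinDists_iff.mp h₂
  exact mem_curveMinDists_iff.mpr ⟨p.trans q, (p.iInf_dist_trans ρ q).symm⟩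

lemma exists_mem_add_dist_sub_dist_le (hgeo : IsGeodesicSpace E) (ρ a b : E) :
    ∃ m ∈ curveMinDists ρ a b, dist ρ a + dist ρ b - dist a b ≤ 2 * m := by
  obtain ⟨p, hp⟩ := hgeo.exists_path_dist_add_dist_eq a b
  refine ⟨_, mem_curveMinDists_iff.mpr ⟨p, rfl⟩, ?_⟩
  rw [← div_le_iff₀' two_pos]
  exact le_ciInf fun t => by
    linarith [add_dist_sub_dist_le_two_mul_dist_of_dist_add_dist_eq (ρ := ρ) (hp t)]

lemma nonempty (hgeo : IsGeodesicSpace E) (ρ a b : E) : (curveMinDists ρ a b).Nonempty :=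
  let ⟨m, hm, _⟩ := exists_mem_add_dist_sub_dist_le hgeo ρ a b
  ⟨m, hm⟩

lemma sSup_add_sSup_le (hgeo : IsGeodesicSpace E) (ρ a b c : E) :
    sSup (curveMinDists ρ a b) + sSup (curveMinDists ρ b c) ≤
      dist ρ b + sSup (curveMinDists ρ a c) := by
  rw [← le_sub_iff_add_le]
  refine csSup_le (nonempty hgeo ρ a b) fun m₁ h₁ => ?_
  rw [le_sub_iff_add_le, add_comm, ← le_sub_iff_add_le]
  refine csSup_le (nonempty hgeo ρ b c) fun m₂ h₂ => ?_
  have hmin := le_csSup (bddAbove ρ a c) (min_mem h₁ h₂)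
  have hmax : max m₁ m₂ ≤ dist ρ b := max_le (le_dist_right h₁) (le_dist_left h₂)
  linarith [min_add_max m₁ m₂]

lemma eq_singleton_zero_of_left_eq (hgeo : IsGeodesicSpace E) (ρ b : E) :
    curveMinDists ρ ρ b = {0} :=
  (nonempty hgeo ρ ρ b).subset_singleton_iff.mp fun m hm =>
    le_antisymm (by simpa using le_dist_left hm) (nonneg hm)

end curveMinDists

end

theorem stmt7_general {E : Type*} [MetricSpace E]
    (hgeo : IsGeodesicSpace E) (ρ : E) :
    (∀ a b c : E, dKac ρ a c ≤ dKac ρ a b + dKac ρ b c) ∧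
    (∀ a b : E, dKac ρ a b ≤ dist a b) ∧
    (∀ a : E, dKac ρ ρ a = dist ρ a) := by
  refine ⟨fun a b c => ?_, fun a b => ?_, fun a => ?_⟩
  · simp only [dKac_eq]
    linarith [curveMinDists.sSup_add_sSup_le hgeo ρ a b c]
  · obtain ⟨m, hm, hle⟩ := curveMinDists.exists_mem_add_dist_sub_dist_le hgeo ρ a b
    rw [dKac_eq]
    linarith [le_csSup (curveMinDists.bddAbove ρ a b) hm]
  · rw [dKac_eq, curveMinDists.eq_singleton_zero_of_left_eq hgeo, csSup_singleton]
    simp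

/-- The continuous cactus pseudo-distance on a pointed compact geodesic metric space
satisfies the triangle inequality, is bounded above by the distance, and agrees with the
distance from the distinguished point. -/
theorem stmt7 {E : Type*} [MetricSpace E] [CompactSpace E]
    (hgeo : IsGeodesicSpace E) (ρ : E) :
    (∀ a b c : E, dKac ρ a c ≤ dKac ρ a b + dKac ρ b c) ∧
    (∀ a b : E, dKac ρ a b ≤ dist a b) ∧
    (∀ a : E, dKac ρ ρ a = dist ρ a) :=
  stmt7_general hgeo ρ
end

section
/- The continuous cactus of any pointed compact geodesic metric space is a compact real tree (an R-tree). -/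
/-- An arc in `T` from `x` to `y` with image `s`: an injective continuous path. -/
def IsArcWithImage {T : Type*} [TopologicalSpace T] (x y : T) (s : Set T) : Prop :=
  ∃ γ : ℝ → T, ContinuousOn γ (Set.Icc 0 1) ∧ Set.InjOn γ (Set.Icc 0 1) ∧
    γ 0 = x ∧ γ 1 = y ∧ γ '' Set.Icc 0 1 = s

/-- A metric space is an `ℝ`-tree when any two distinct points are joined by a unique arc,
which is a geodesic segment. -/
def IsRTree (T : Type*) [MetricSpace T] : Prop :=
  ∀ x y : T, x ≠ y →
    (∃! s : Set T, IsArcWithImage x y s) ∧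
    (∀ s : Set T, IsArcWithImage x y s →
      ∃ g : ℝ → T, g 0 = x ∧ g (dist x y) = y ∧
        (∀ u ∈ Set.Icc (0 : ℝ) (dist x y), ∀ v ∈ Set.Icc (0 : ℝ) (dist x y),
          dist (g u) (g v) = |u - v|) ∧ g '' Set.Icc 0 (dist x y) = s)

/-!
Write `m(a, b) = sup_γ inf_t d(ρ, γ t)`, so that `d_Kac(a, b) = d(ρ, a) + d(ρ, b) - 2 m(a, b)`.
Concatenating paths gives `m(a, c) ≥ min (m(a, b)) (m(b, c))`, and following a geodesic gives
`m(a, b) ≥ max (d(ρ, a)) (d(ρ, b)) - d(a, b)`. Hence `d_Kac` is a pseudometric bounded by `2 d`,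
its metric quotient `T` is compact, and the Gromov product of `T` based at `ρ` is exactly `m`,
so `T` is `0`-hyperbolic. Geodesics of `E` issued from `ρ` stay geodesics in `T`, and in a
`0`-hyperbolic space two geodesics from a common point span a tripod, so `T` is geodesic.
Finally, in a `0`-hyperbolic space every path from `x` to `y` meets every point `z` with
`d(x, z) + d(z, y) = d(x, y)`; so a geodesic segment lies in every arc with the same endpoints,
and by connectedness it is the whole arc.
-/

open Set Metric

section Geodesic

variable {X : Type*} [MetricSpace X]

structure IsGeodesic (γ : ℝ → X) (x y : X) : Prop where
  source : γ 0 = x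
  target : γ (dist x y) = y
  dist_eq : ∀ s ∈ Icc 0 (dist x y), ∀ t ∈ Icc 0 (dist x y), dist (γ s) (γ t) = |s - t|

lemma isGeodesicSpace_iff : IsGeodesicSpace X ↔ ∀ x y : X, ∃ γ, IsGeodesic γ x y :=
  forall₂_congr fun _ _ => exists_congr fun _ => ⟨fun ⟨h₀, h₁, h⟩ => ⟨h₀, h₁, h⟩,
    fun ⟨h₀, h₁, h⟩ => ⟨h₀, h₁, h⟩⟩

lemma mul_mem_Icc_of_mem_Icc {t L : ℝ} (ht : t ∈ Icc (0 : ℝ) 1) (hL : 0 ≤ L) : t * L ∈ Icc 0 L :=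
  ⟨mul_nonneg ht.1 hL, mul_le_of_le_one_left hL ht.2⟩

namespace IsGeodesic

variable {γ : ℝ → X} {x y : X} (hγ : IsGeodesic γ x y)
include hγ

lemma dist_source_apply {s : ℝ} (hs : s ∈ Icc 0 (dist x y)) : dist x (γ s) = s := by
  rw [← hγ.source, hγ.dist_eq 0 ⟨le_rfl, dist_nonneg⟩ s hs, zero_sub, abs_neg, abs_of_nonneg hs.1]

lemma dist_apply_target {s : ℝ} (hs : s ∈ Icc 0 (dist x y)) : dist (γ s) y = dist x y - s := by
  conv_lhs => rw [← hγ.target]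
  rw [hγ.dist_eq s hs _ ⟨dist_nonneg, le_rfl⟩, abs_sub_comm, abs_of_nonneg (sub_nonneg.2 hs.2)]

lemma continuousOn : ContinuousOn γ (Icc 0 (dist x y)) :=
  (LipschitzOnWith.of_dist_le_mul fun s hs t ht => by
    rw [hγ.dist_eq s hs t ht, NNReal.coe_one, one_mul, Real.dist_eq]).continuousOn

lemma continuousOn_rescale : ContinuousOn (fun t => γ (t * dist x y)) (Icc 0 1) :=
  hγ.continuousOn.comp (by fun_prop) fun _ ht => mul_mem_Icc_of_mem_Icc ht dist_nonneg

def toPath : Path x y where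
  toFun t := γ (t * dist x y)
  continuous_toFun := hγ.continuousOn_rescale.domRestrict
  source' := by simp [hγ.source]
  target' := by simp [hγ.target]

@[simp]
lemma toPath_apply (t : unitInterval) : hγ.toPath t = γ (t * dist x y) := rfl

lemma isArcWithImage (hxy : x ≠ y) : IsArcWithImage x y (γ '' Icc 0 (dist x y)) := by
  have hD : 0 < dist x y := dist_pos.2 hxy
  refine ⟨_, hγ.continuousOn_rescale, fun s hs t ht hst => ?_, by simp [hγ.source],
    by simp [hγ.target], by
      rw [← image_image (g := γ), image_mul_right_Icc zero_le_one hD.le, zero_mul, one_mul]⟩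
  have := hγ.dist_eq _ (mul_mem_Icc_of_mem_Icc hs hD.le) _ (mul_mem_Icc_of_mem_Icc ht hD.le)
  rw [show γ (s * dist x y) = γ (t * dist x y) from hst, dist_self, eq_comm, abs_eq_zero, ← sub_mul,
    mul_eq_zero, sub_eq_zero] at this
  exact this.resolve_right hD.ne'

end IsGeodesic

lemma dist_eq_abs_sub_of_piecewise {γ : ℝ → X} {c L : ℝ}
    (h₁ : ∀ u ∈ Icc 0 c, ∀ v ∈ Icc 0 c, dist (γ u) (γ v) = |u - v|)
    (h₂ : ∀ u ∈ Ioc c L, ∀ v ∈ Ioc c L, dist (γ u) (γ v) = |u - v|)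
    (h₁₂ : ∀ u ∈ Icc 0 c, ∀ v ∈ Ioc c L, dist (γ u) (γ v) = v - u) :
    ∀ u ∈ Icc 0 L, ∀ v ∈ Icc 0 L, dist (γ u) (γ v) = |u - v| := by
  intro u hu v hv
  wlog huv : u ≤ v generalizing u v
  · rw [dist_comm, abs_sub_comm]; exact this v hv u hu (le_of_not_ge huv)
  rcases le_or_gt u c with hu' | hu' <;> rcases le_or_gt v c with hv' | hv'
  · exact h₁ u ⟨hu.1, hu'⟩ v ⟨hv.1, hv'⟩
  · rw [h₁₂ u ⟨hu.1, hu'⟩ v ⟨hv', hv.2⟩, abs_of_nonpos (sub_nonpos.2 huv), neg_sub]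
  · linarith
  · exact h₂ u ⟨hu', hu.2⟩ v ⟨hv', hv.2⟩

lemma IsGeodesicSpace.pathConnectedSpace [Nonempty X] (h : IsGeodesicSpace X) :
    PathConnectedSpace X where
  nonempty := ‹_›
  joined x y := by
    obtain ⟨γ, hγ⟩ := isGeodesicSpace_iff.1 h x y
    exact ⟨hγ.toPath⟩

end Geodesic

section Cactus

variable {E : Type*} [MetricSpace E]

lemma infDist_range_trans (ρ : E) {a b c : E} (γ : Path a b) (γ' : Path b c) :
    infDist ρ (range (γ.trans γ')) = min (infDist ρ (range γ)) (infDist ρ (range γ')) := by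
  refine eq_of_forall_le_iff fun r => ?_
  simp only [Path.trans_range, le_min_iff, le_infDist (range_nonempty _),
    le_infDist ((range_nonempty _).mono subset_union_left), mem_union, or_imp, forall_and]

noncomputable def cactusLevel (ρ a b : E) : ℝ :=
  sSup (range fun γ : Path a b => infDist ρ (range γ))

lemma iInf_dist_eq_infDist_range (ρ : E) {ι : Type*} [Nonempty ι] (f : ι → E) :
    ⨅ i, dist ρ (f i) = infDist ρ (range f) :=
  eq_of_forall_le_iff fun r => by
    rw [le_ciInf_iff ⟨0, by rintro _ ⟨i, rfl⟩; exact dist_nonneg⟩, le_infDist (range_nonempty f),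
      forall_mem_range]

lemma dKac_eq_cactusLevel (ρ a b : E) :
    dKac ρ a b = dist ρ a + dist ρ b - 2 * cactusLevel ρ a b := by
  have : {m : ℝ | ∃ γ : ℝ → E, ContinuousOn γ (Icc 0 1) ∧ γ 0 = a ∧ γ 1 = b ∧
      m = ⨅ t : Icc (0 : ℝ) 1, dist ρ (γ t)} = range fun γ : Path a b => infDist ρ (range γ) := by
    ext m
    constructor
    · rintro ⟨γ, hγ, h0, h1, rfl⟩
      exact ⟨⟨⟨(Icc 0 1).domRestrict γ, hγ.domRestrict⟩, h0, h1⟩,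
        (iInf_dist_eq_infDist_range ρ ((Icc 0 1).domRestrict γ)).symm⟩
    · rintro ⟨γ, rfl⟩
      refine ⟨γ.extend, γ.continuous_extend.continuousOn, γ.extend_zero, γ.extend_one, ?_⟩
      simp only [Path.extend_extends']
      exact (iInf_dist_eq_infDist_range ρ γ).symm
  rw [dKac, this, cactusLevel]

lemma le_cactusLevel (ρ : E) {a b : E} (γ : Path a b) :
    infDist ρ (range γ) ≤ cactusLevel ρ a b :=
  le_csSup ⟨dist ρ a, by rintro _ ⟨γ, rfl⟩; exact infDist_le_dist_of_mem ⟨0, γ.source⟩⟩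
    ⟨γ, rfl⟩

lemma cactusLevel_comm (ρ a b : E) : cactusLevel ρ a b = cactusLevel ρ b a := by
  have key : ∀ a b : E, (range fun γ : Path a b => infDist ρ (range γ)) ⊆
      range fun γ : Path b a => infDist ρ (range γ) := by
    rintro a b _ ⟨γ, rfl⟩
    exact ⟨γ.symm, by simp only [Path.symm_range]⟩
  rw [cactusLevel, cactusLevel, (key a b).antisymm (key b a)]

lemma dKac_comm (ρ a b : E) : dKac ρ a b = dKac ρ b a := by
  rw [dKac_eq_cactusLevel, dKac_eq_cactusLevel, cactusLevel_comm]; ring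

section PathConnected

variable [PathConnectedSpace E] (ρ : E)

lemma range_infDist_nonempty (a b : E) :
    (range fun γ : Path a b => infDist ρ (range γ)).Nonempty :=
  range_nonempty_iff_nonempty.2 ⟨PathConnectedSpace.somePath a b⟩

lemma cactusLevel_le_dist_left (a b : E) : cactusLevel ρ a b ≤ dist ρ a :=
  csSup_le (range_infDist_nonempty ρ a b) <| by
    rintro _ ⟨γ, rfl⟩; exact infDist_le_dist_of_mem ⟨0, γ.source⟩

lemma cactusLevel_le_dist_right (a b : E) : cactusLevel ρ a b ≤ dist ρ b :=
  cactusLevel_comm ρ a b ▸ cactusLevel_le_dist_left ρ b a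

lemma cactusLevel_nonneg (a b : E) : 0 ≤ cactusLevel ρ a b :=
  infDist_nonneg.trans (le_cactusLevel ρ (PathConnectedSpace.somePath a b))

lemma cactusLevel_self (a : E) : cactusLevel ρ a a = dist ρ a := by
  refine (cactusLevel_le_dist_left ρ a a).antisymm ?_
  simpa only [Path.refl_range, infDist_singleton] using le_cactusLevel ρ (Path.refl a)

lemma cactusLevel_root (a : E) : cactusLevel ρ ρ a = 0 :=
  ((cactusLevel_le_dist_left ρ ρ a).trans_eq (dist_self ρ)).antisymm (cactusLevel_nonneg ρ ρ a)

lemma min_cactusLevel_le (a b c : E) :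
    min (cactusLevel ρ a b) (cactusLevel ρ b c) ≤ cactusLevel ρ a c := by
  refine le_of_forall_lt fun r hr => ?_
  obtain ⟨hrab, hrbc⟩ := lt_min_iff.1 hr
  obtain ⟨_, ⟨γ, rfl⟩, hγ⟩ := exists_lt_of_lt_csSup (range_infDist_nonempty ρ a b) hrab
  obtain ⟨_, ⟨γ', rfl⟩, hγ'⟩ := exists_lt_of_lt_csSup (range_infDist_nonempty ρ b c) hrbc
  calc r < infDist ρ (range (γ.trans γ')) := by rw [infDist_range_trans]; exact lt_min hγ hγ'
    _ ≤ cactusLevel ρ a c := le_cactusLevel ρ _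

lemma dKac_self (a : E) : dKac ρ a a = 0 := by
  rw [dKac_eq_cactusLevel, cactusLevel_self]; ring

lemma dKac_triangle (a b c : E) : dKac ρ a c ≤ dKac ρ a b + dKac ρ b c := by
  simp only [dKac_eq_cactusLevel]
  have := min_cactusLevel_le ρ a b c
  have := cactusLevel_le_dist_right ρ a b
  have := cactusLevel_le_dist_left ρ b c
  rcases min_cases (cactusLevel ρ a b) (cactusLevel ρ b c) with ⟨h, -⟩ | ⟨h, -⟩ <;> linarith

lemma abs_dist_sub_le_dKac (a b : E) : |dist ρ a - dist ρ b| ≤ dKac ρ a b := by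
  have := cactusLevel_le_dist_left ρ a b
  have := cactusLevel_le_dist_right ρ a b
  rw [dKac_eq_cactusLevel, abs_le]; constructor <;> linarith

lemma dKac_root (a : E) : dKac ρ ρ a = dist ρ a := by
  rw [dKac_eq_cactusLevel, cactusLevel_root, dist_self]; ring

end PathConnected

lemma sub_dist_le_cactusLevel (hgeo : IsGeodesicSpace E) (ρ a b : E) :
    max (dist ρ a) (dist ρ b) - dist a b ≤ cactusLevel ρ a b := by
  obtain ⟨γ, hγ⟩ := isGeodesicSpace_iff.1 hgeo a b
  refine le_trans ?_ (le_cactusLevel ρ hγ.toPath)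
  rw [le_infDist (range_nonempty _)]
  rintro _ ⟨t, rfl⟩
  have hs := mul_mem_Icc_of_mem_Icc t.2 (dist_nonneg (x := a) (y := b))
  have ha := hγ.dist_source_apply hs
  have hb := hγ.dist_apply_target hs
  have := dist_triangle_right ρ a (γ (t * dist a b))
  have := dist_triangle ρ (γ (t * dist a b)) b
  rw [hγ.toPath_apply, sub_le_iff_le_add, max_le_iff]
  constructor <;> linarith [hs.1, hs.2]

lemma dKac_le (hgeo : IsGeodesicSpace E) (ρ a b : E) :
    dKac ρ a b ≤ 2 * dist a b - |dist ρ a - dist ρ b| := by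
  have := sub_dist_le_cactusLevel hgeo ρ a b
  rw [dKac_eq_cactusLevel, ← max_sub_min_eq_abs']
  have := min_add_max (dist ρ a) (dist ρ b)
  linarith

lemma dKac_le_two_mul_dist (hgeo : IsGeodesicSpace E) (ρ a b : E) : dKac ρ a b ≤ 2 * dist a b :=
  (dKac_le hgeo ρ a b).trans (sub_le_self _ (abs_nonneg _))

lemma dKac_eq_dist_of_dist_eq_abs [PathConnectedSpace E] (hgeo : IsGeodesicSpace E) {ρ a b : E}
    (h : dist a b = |dist ρ a - dist ρ b|) : dKac ρ a b = dist a b :=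
  le_antisymm (by linarith [dKac_le hgeo ρ a b]) (h ▸ abs_dist_sub_le_dKac ρ a b)

end Cactus

section Hyperbolic

variable {X : Type*} [MetricSpace X]

/-- The Gromov product `(x | y)_w`. -/
noncomputable def gromovProduct (w x y : X) : ℝ := (dist w x + dist w y - dist x y) / 2

variable (X) in
def IsZeroHyperbolic : Prop :=
  ∀ w x y z : X, min (gromovProduct w x z) (gromovProduct w z y) ≤ gromovProduct w x y

lemma gromovProduct_comm (w x y : X) : gromovProduct w x y = gromovProduct w y x := by
  simp only [gromovProduct, dist_comm x y, add_comm (dist w x)]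

lemma gromovProduct_self (w x : X) : gromovProduct w x x = dist w x := by
  simp only [gromovProduct, dist_self]; ring

lemma gromovProduct_nonneg (w x y : X) : 0 ≤ gromovProduct w x y := by
  have := dist_triangle_left x y w
  simp only [gromovProduct]; linarith

lemma gromovProduct_le_dist_left (w x y : X) : gromovProduct w x y ≤ dist w x := by
  have := dist_triangle w x y
  simp only [gromovProduct]; linarith

lemma gromovProduct_le_dist_right (w x y : X) : gromovProduct w x y ≤ dist w y :=
  gromovProduct_comm w x y ▸ gromovProduct_le_dist_left w y x

lemma gromovProduct_eq_zero_of_dist_add_dist_eq {w x y : X}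
    (h : dist x w + dist w y = dist x y) : gromovProduct w x y = 0 := by
  simp only [gromovProduct, dist_comm w x, h, sub_self, zero_div]

lemma gromovProduct_eq_basepoint (o w x y : X) : gromovProduct w x y =
    dist o w - gromovProduct o w x - gromovProduct o w y + gromovProduct o x y := by
  simp only [gromovProduct]; ring

/-- Rewritten with products based at `o`, the claim at `w` is the four-point condition
`min ((x|z) + (w|y)) ((z|y) + (w|x)) ≤ (x|y) + (w|z)`, which follows from four instances of the
hypothesis by cases. -/
lemma isZeroHyperbolic_of_basepoint (o : X)
    (h : ∀ x y z : X, min (gromovProduct o x z) (gromovProduct o z y) ≤ gromovProduct o x y) :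
    IsZeroHyperbolic X := by
  intro w x y z
  have h₁ := min_le_iff.1 (h x y z)
  have h₂ := min_le_iff.1 (h x y w)
  have h₃ := min_le_iff.1 (h w z x)
  have h₄ := min_le_iff.1 (h w z y)
  rw [gromovProduct_comm o x w] at h₂
  rw [gromovProduct_comm o y z] at h₄
  rw [gromovProduct_eq_basepoint o w x z, gromovProduct_eq_basepoint o w z y,
    gromovProduct_eq_basepoint o w x y, min_le_iff]
  rcases le_total (gromovProduct o x y) (gromovProduct o w z) with h₀ | h₀ <;>
    rcases h₁ with h₁ | h₁ <;> rcases h₂ with h₂ | h₂ <;> rcases h₃ with h₃ | h₃ <;>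
    rcases h₄ with h₄ | h₄ <;> first | (left; linarith) | (right; linarith)

lemma IsGeodesic.gromovProduct_apply {γ : ℝ → X} {x y : X} (hγ : IsGeodesic γ x y) {s : ℝ}
    (hs : s ∈ Icc 0 (dist x y)) : gromovProduct x (γ s) y = s := by
  simp only [gromovProduct, hγ.dist_source_apply hs, hγ.dist_apply_target hs]; ring

namespace IsZeroHyperbolic

variable (hX : IsZeroHyperbolic X)
include hX

lemma mem_range_of_dist_add_dist_eq {x y z : X} (γ : Path x y)
    (hz : dist x z + dist z y = dist x y) : z ∈ range γ := by
  by_contra hzγ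
  set δ := infDist z (range γ)
  have hδ : 0 < δ :=
    ((isCompact_range γ.continuous).isClosed.notMem_iff_infDist_pos (range_nonempty γ)).1 hzγ
  have hδγ (t : unitInterval) : δ ≤ dist z (γ t) := infDist_le_dist_of_mem ⟨t, rfl⟩
  -- clopen because `(γ t | γ s)_z` is close to `dist z (γ t) ≥ δ` for `s` near `t`
  have hS : IsClopen {t | δ / 2 ≤ gromovProduct z x (γ t)} := by
    refine ⟨isClosed_le continuous_const (by unfold gromovProduct; fun_prop),
      isOpen_iff_mem_nhds.2 fun t ht => ?_⟩
    have hU : IsOpen {s | δ / 2 < gromovProduct z (γ t) (γ s)} :=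
      isOpen_lt continuous_const (by unfold gromovProduct; fun_prop)
    refine Filter.mem_of_superset (hU.mem_nhds ?_) fun s hs => ?_
    · rw [mem_ofPred_eq, gromovProduct_self]; linarith [hδγ t]
    · exact (le_min ht hs.le).trans (hX z x (γ s) (γ t))
  have h₀ : (0 : unitInterval) ∈ {t | δ / 2 ≤ gromovProduct z x (γ t)} := by
    rw [mem_ofPred_eq, γ.source, gromovProduct_self]; linarith [γ.source ▸ hδγ 0]
  have h₁ := hS.eq_univ ⟨0, h₀⟩ ▸ mem_univ (1 : unitInterval)
  rw [mem_ofPred_eq, γ.target, gromovProduct_eq_zero_of_dist_add_dist_eq hz] at h₁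
  linarith

/-- Geodesic triangles are tripods. -/
lemma dist_apply_apply_of_isGeodesic {o x y : X} {g₁ g₂ : ℝ → X} (h₁ : IsGeodesic g₁ o x)
    (h₂ : IsGeodesic g₂ o y) {r s : ℝ} (hr : r ∈ Icc (gromovProduct o x y) (dist o x))
    (hs : s ∈ Icc (gromovProduct o x y) (dist o y)) :
    dist (g₁ r) (g₂ s) = r + s - 2 * gromovProduct o x y := by
  set m := gromovProduct o x y
  set P := gromovProduct o (g₁ r) (g₂ s) with hP
  have hm := gromovProduct_nonneg o x y
  have hr' : r ∈ Icc 0 (dist o x) := ⟨hm.trans hr.1, hr.2⟩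
  have hs' : s ∈ Icc 0 (dist o y) := ⟨hm.trans hs.1, hs.2⟩
  have e₁ := h₁.gromovProduct_apply hr'
  have e₂ := h₂.gromovProduct_apply hs'
  have hPr : P ≤ r := (gromovProduct_le_dist_left o _ _).trans_eq (h₁.dist_source_apply hr')
  have hPs : P ≤ s := (gromovProduct_le_dist_right o _ _).trans_eq (h₂.dist_source_apply hs')
  have lower : m ≤ P := calc
    m ≤ min r (min m s) := le_min hr.1 (le_min le_rfl hs.1)
    _ = min (gromovProduct o (g₁ r) x) (min m (gromovProduct o y (g₂ s))) := by
      rw [e₁, gromovProduct_comm o y, e₂]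
    _ ≤ min (gromovProduct o (g₁ r) x) (gromovProduct o x (g₂ s)) :=
      min_le_min_left _ (hX o x (g₂ s) y)
    _ ≤ P := hX o (g₁ r) (g₂ s) x
  have upper : P ≤ m := calc
    P ≤ min r (min P s) := le_min hPr (le_min le_rfl hPs)
    _ = min (gromovProduct o x (g₁ r)) (min P (gromovProduct o (g₂ s) y)) := by
      rw [gromovProduct_comm o x, e₁, e₂]
    _ ≤ min (gromovProduct o x (g₁ r)) (gromovProduct o (g₁ r) y) :=
      min_le_min_left _ (hX o (g₁ r) y (g₂ s))
    _ ≤ m := hX o x y (g₁ r)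
  have := upper.antisymm lower
  rw [hP, gromovProduct, h₁.dist_source_apply hr', h₂.dist_source_apply hs'] at this
  linarith

lemma exists_isGeodesic {o x y : X} {g₁ g₂ : ℝ → X} (h₁ : IsGeodesic g₁ o x)
    (h₂ : IsGeodesic g₂ o y) : ∃ γ, IsGeodesic γ x y := by
  set m := gromovProduct o x y
  have hm := gromovProduct_nonneg o x y
  have hmx := gromovProduct_le_dist_left o x y
  have hmy := gromovProduct_le_dist_right o x y
  have hD : dist x y = dist o x + dist o y - 2 * m := by simp only [m, gromovProduct]; ring
  -- run back along `g₁` from `x` down to the branch point, then out along `g₂` to `y`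
  let γ u := if u ≤ dist o x - m then g₁ (dist o x - u) else g₂ (u - dist o x + 2 * m)
  have first {u} (hu : u ∈ Icc 0 (dist o x - m)) :
      γ u = g₁ (dist o x - u) ∧ dist o x - u ∈ Icc m (dist o x) :=
    ⟨if_pos hu.2, by constructor <;> linarith [hu.1, hu.2]⟩
  have second {u} (hu : u ∈ Ioc (dist o x - m) (dist x y)) :
      γ u = g₂ (u - dist o x + 2 * m) ∧ u - dist o x + 2 * m ∈ Icc m (dist o y) :=
    ⟨if_neg (not_le.2 hu.1), by constructor <;> linarith [hu.1, hu.2]⟩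
  have hIcc := Icc_subset_Icc_left (b := dist o x) hm
  have hIcc' := Icc_subset_Icc_left (b := dist o y) hm
  refine ⟨γ, ?_, ?_, dist_eq_abs_sub_of_piecewise (c := dist o x - m) ?_ ?_ ?_⟩
  · rw [(first ⟨le_rfl, by linarith⟩).1, sub_zero, h₁.target]
  · by_cases h : dist x y ≤ dist o x - m
    · obtain ⟨e, hmem⟩ := first ⟨dist_nonneg, h⟩
      have := dist_apply_apply_of_isGeodesic hX h₁ h₂ hmem ⟨hmy, le_rfl⟩
      rw [h₂.target] at this
      rw [e]
      exact dist_eq_zero.1 (by linarith)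
    · rw [(second ⟨not_le.1 h, le_rfl⟩).1, hD, show dist o x + dist o y - 2 * m - dist o x + 2 * m
        = dist o y by ring, h₂.target]
  · intro u hu v hv
    obtain ⟨eu, hu₁⟩ := first hu
    obtain ⟨ev, hv₁⟩ := first hv
    rw [eu, ev, h₁.dist_eq _ (hIcc hu₁) _ (hIcc hv₁), abs_sub_comm]; ring_nf
  · intro u hu v hv
    obtain ⟨eu, hu₂⟩ := second hu
    obtain ⟨ev, hv₂⟩ := second hv
    rw [eu, ev, h₂.dist_eq _ (hIcc' hu₂) _ (hIcc' hv₂)]; ring_nf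
  · intro u hu v hv
    obtain ⟨eu, hu₁⟩ := first hu
    obtain ⟨ev, hv₂⟩ := second hv
    rw [eu, ev, dist_apply_apply_of_isGeodesic hX h₁ h₂ hu₁ hv₂]; ring

lemma isGeodesicSpace_of_isGeodesic_from (o : X) (h : ∀ x, ∃ γ, IsGeodesic γ o x) :
    IsGeodesicSpace X :=
  isGeodesicSpace_iff.2 fun x y =>
    let ⟨_, h₁⟩ := h x
    let ⟨_, h₂⟩ := h y
    hX.exists_isGeodesic h₁ h₂

end IsZeroHyperbolic

end Hyperbolic

section Arc

variable {X : Type*} [MetricSpace X] {x y : X} {s : Set X}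

lemma IsArcWithImage.exists_path (h : IsArcWithImage x y s) : ∃ γ : Path x y, range γ = s := by
  obtain ⟨γ, hc, -, h₀, h₁, rfl⟩ := h
  exact ⟨⟨⟨(Icc 0 1).domRestrict γ, hc.domRestrict⟩, h₀, h₁⟩, (image_eq_range γ _).symm⟩

lemma IsArcWithImage.subset_of_isPreconnected (h : IsArcWithImage x y s) {G : Set X}
    (hG : IsPreconnected G) (hGs : G ⊆ s) (hx : x ∈ G) (hy : y ∈ G) : s ⊆ G := by
  obtain ⟨γ, hc, hinj, h₀, h₁, rfl⟩ := h
  let f : unitInterval → X := (Icc 0 1).domRestrict γ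
  have hf : Continuous f := hc.domRestrict
  have hfinj : Function.Injective f := fun u v huv => Subtype.ext (hinj u.2 v.2 huv)
  have hpre := hG.preimage_of_isClosedMap hfinj hf.isClosedMap (by rwa [range_domRestrict])
  have hall := hpre.Icc_subset (a := 0) (b := 1) (by simpa [f, h₀]) (by simpa [f, h₁])
  rintro _ ⟨t, ht, rfl⟩
  exact hall (show (⟨t, ht⟩ : unitInterval) ∈ Icc 0 1 from ⟨ht.1, ht.2⟩)

end Arc

lemma IsZeroHyperbolic.isRTree {X : Type*} [MetricSpace X] (hX : IsZeroHyperbolic X)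
    (hgeo : IsGeodesicSpace X) : IsRTree X := by
  intro x y hxy
  obtain ⟨g, hg⟩ := isGeodesicSpace_iff.1 hgeo x y
  have hGs : ∀ s, IsArcWithImage x y s → g '' Icc 0 (dist x y) ⊆ s := by
    rintro s hs _ ⟨u, hu, rfl⟩
    obtain ⟨γ, rfl⟩ := hs.exists_path
    refine hX.mem_range_of_dist_add_dist_eq γ ?_
    rw [hg.dist_source_apply hu, hg.dist_apply_target hu, add_sub_cancel]
  have hsG : ∀ s, IsArcWithImage x y s → s = g '' Icc 0 (dist x y) := fun s hs =>
    (hs.subset_of_isPreconnected (isPreconnected_Icc.image _ hg.continuousOn) (hGs s hs)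
      ⟨0, ⟨le_rfl, dist_nonneg⟩, hg.source⟩ ⟨_, ⟨dist_nonneg, le_rfl⟩, hg.target⟩).antisymm
      (hGs s hs)
  exact ⟨⟨_, hg.isArcWithImage hxy, hsG⟩,
    fun s hs => ⟨g, hg.source, hg.target, hg.dist_eq, (hsG s hs).symm⟩⟩

section Quotient

variable {E : Type*} [MetricSpace E] [PathConnectedSpace E] {ρ : E}
  {T : Type*} [MetricSpace T] {p : E → T}

lemma gromovProduct_eq_cactusLevel (hd : ∀ a b, dist (p a) (p b) = dKac ρ a b) (a b : E) :
    gromovProduct (p ρ) (p a) (p b) = cactusLevel ρ a b := by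
  simp only [gromovProduct, hd, dKac_root, dKac_eq_cactusLevel]; ring

lemma isZeroHyperbolic_of_dist_eq_dKac (hp : Function.Surjective p)
    (hd : ∀ a b, dist (p a) (p b) = dKac ρ a b) : IsZeroHyperbolic T :=
  isZeroHyperbolic_of_basepoint (p ρ) <| hp.forall₃.2 fun a b c => by
    simpa only [gromovProduct_eq_cactusLevel hd] using min_cactusLevel_le ρ a c b

lemma IsGeodesic.comp_of_dist_eq_dKac (hgeo : IsGeodesicSpace E)
    (hd : ∀ a b, dist (p a) (p b) = dKac ρ a b) {σ : ℝ → E} {a : E} (hσ : IsGeodesic σ ρ a) :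
    IsGeodesic (p ∘ σ) (p ρ) (p a) := by
  have hρa : dist (p ρ) (p a) = dist ρ a := by rw [hd, dKac_root]
  refine ⟨congrArg p hσ.source, hρa ▸ congrArg p hσ.target, fun s hs t ht => ?_⟩
  rw [hρa] at hs ht
  have hst := hσ.dist_eq s hs t ht
  refine (hd _ _).trans ((dKac_eq_dist_of_dist_eq_abs hgeo ?_).trans hst)
  rw [hst, hσ.dist_source_apply hs, hσ.dist_source_apply ht]

lemma isRTree_of_dist_eq_dKac (hgeo : IsGeodesicSpace E) (hp : Function.Surjective p)
    (hd : ∀ a b, dist (p a) (p b) = dKac ρ a b) : IsRTree T :=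
  have hX := isZeroHyperbolic_of_dist_eq_dKac hp hd
  hX.isRTree <| hX.isGeodesicSpace_of_isGeodesic_from (p ρ) <| hp.forall.2 fun a =>
    let ⟨_, hσ⟩ := isGeodesicSpace_iff.1 hgeo ρ a
    ⟨_, hσ.comp_of_dist_eq_dKac hgeo hd⟩

end Quotient

/-- `E` with the pseudometric `dKac ρ`; the cactus is its metric quotient. -/
def KacSpace {E : Type*} (_ : E) : Type _ := E

noncomputable instance {E : Type*} [MetricSpace E] [PathConnectedSpace E] (ρ : E) :
    PseudoMetricSpace (KacSpace ρ) where
  dist := dKac (E := E) ρ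
  dist_self := dKac_self (E := E) ρ
  dist_comm := dKac_comm (E := E) ρ
  dist_triangle := dKac_triangle (E := E) ρ

/-- The continuous cactus of a pointed compact geodesic metric space is a compact
`ℝ`-tree: there is a compact metric space `T` which is an `ℝ`-tree, together with the
quotient map `p : E → T` realizing `d_Kac` as the distance of `T`. -/
theorem stmt11 {E : Type u} [MetricSpace E] [CompactSpace E]
    (hgeo : IsGeodesicSpace E) (ρ : E) :
    ∃ (T : Type u) (_ : MetricSpace T), CompactSpace T ∧ IsRTree T ∧
      ∃ p : E → T, Function.Surjective p ∧
        ∀ a b : E, dist (p a) (p b) = dKac ρ a b := by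
  have : Nonempty E := ⟨ρ⟩
  have : PathConnectedSpace E := hgeo.pathConnectedSpace
  let p (a : E) : SeparationQuotient (KacSpace ρ) := SeparationQuotient.mk (X := KacSpace ρ) a
  have hp : Function.Surjective p := SeparationQuotient.surjective_mk (X := KacSpace ρ)
  have hd (a b : E) : dist (p a) (p b) = dKac ρ a b := SeparationQuotient.dist_mk _ _
  have hpc : Continuous p := (LipschitzWith.of_dist_le_mul (K := 2) fun a b =>
    (hd a b).trans_le (by exact_mod_cast dKac_le_two_mul_dist hgeo ρ a b)).continuous
  exact ⟨_, inferInstance, hp.compactSpace hpc, isRTree_of_dist_eq_dKac hgeo hp hd, p, hp, hd⟩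
end

section
/- In a compact metric space, the intersection of a totally ordered (by reverse inclusion) family of nonempty closed connected sets, each of which is a connected component of the complement of an open ball B(ρ, r_i), is itself a nonempty closed connected set equal to a connected component of the complement of B(ρ, sup r_i). -/
/-!
A directed intersection of continua in a Hausdorff space is a continuum: were it split by two
disjoint open sets, compactness would force one member of the family into their union, and that
member, being connected, would lie in one of them. For a chain of components `C i` of
`(B(ρ, r i))ᶜ`, any point `x` of the intersection makes each `C i` the component of `x`; the
intersection is then a connected subset of `⋂ i, (B(ρ, r i))ᶜ = (B(ρ, sup r))ᶜ` that contains
the component of `x` there, hence equals it.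
-/

open Set Metric

theorem IsClosed.connectedComponentIn {X : Type*} [TopologicalSpace X] {F : Set X}
    (hF : IsClosed F) (x : X) : IsClosed (connectedComponentIn F x) := by
  by_cases hx : x ∈ F
  · rw [connectedComponentIn_eq_image hx]
    exact hF.isClosedMap_subtype_val _ isClosed_connectedComponent
  · rw [connectedComponentIn_eq_empty hx]
    exact isClosed_empty

theorem IsCompact.isPreconnected_iInter_of_directed {X ι : Type*} [TopologicalSpace X]
    [T2Space X] [Nonempty ι] {K : ι → Set X} (hK : ∀ i, IsCompact (K i))
    (hconn : ∀ i, IsPreconnected (K i)) (hdir : Directed (· ⊇ ·) K) :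
    IsPreconnected (⋂ i, K i) := by
  set L := ⋂ i, K i
  have hL : IsCompact L :=
    (hK (Classical.arbitrary ι)).of_isClosed_subset (isClosed_iInter fun i => (hK i).isClosed)
      (iInter_subset K _)
  refine isPreconnected_iff_subset_of_disjoint_closed.2 fun t t' ht ht' hLtt' hdisj => ?_
  have hdisj' : Disjoint (L ∩ t) (L ∩ t') := by
    rw [disjoint_iff_inter_eq_empty, inter_inter_inter_comm, inter_self, hdisj]
  obtain ⟨u, v, hu, hv, htu, ht'v, huv⟩ :=
    SeparatedNhds.of_isCompact_isCompact (hL.inter_right ht) (hL.inter_right ht') hdisj'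
  have hLuv : L ⊆ u ∪ v := fun y hy =>
    (hLtt' hy).imp (fun h => htu ⟨hy, h⟩) (fun h => ht'v ⟨hy, h⟩)
  obtain ⟨i, hi⟩ := exists_subset_nhds_of_isCompact hdir hK
    fun y hy => (hu.union hv).mem_nhds (hLuv hy)
  have hLi : L ⊆ K i := iInter_subset K i
  rcases (hconn i).subset_or_subset hu hv huv hi with hiu | hiv
  · refine Or.inl fun y hy => (hLtt' hy).resolve_right fun hyt' => ?_
    exact huv.le_bot ⟨hiu (hLi hy), ht'v ⟨hy, hyt'⟩⟩
  · refine Or.inr fun y hy => (hLtt' hy).resolve_left fun hyt => ?_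
    exact huv.le_bot ⟨htu ⟨hy, hyt⟩, hiv (hLi hy)⟩

theorem IsCompact.isConnected_iInter_of_directed {X ι : Type*} [TopologicalSpace X]
    [T2Space X] [Nonempty ι] {K : ι → Set X} (hK : ∀ i, IsCompact (K i))
    (hconn : ∀ i, IsConnected (K i)) (hdir : Directed (· ⊇ ·) K) :
    IsConnected (⋂ i, K i) :=
  ⟨IsCompact.nonempty_iInter_of_directed_nonempty_isCompact_isClosed K hdir
      (fun i => (hconn i).nonempty) hK fun i => (hK i).isClosed,
    isPreconnected_iInter_of_directed hK (fun i => (hconn i).isPreconnected) hdir⟩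

theorem iInter_connectedComponentIn {X ι : Type*} [TopologicalSpace X] {F : ι → Set X} {x : X}
    (h : IsPreconnected (⋂ i, connectedComponentIn (F i) x)) :
    ⋂ i, connectedComponentIn (F i) x = connectedComponentIn (⋂ i, F i) x := by
  refine (subset_iInter fun i => connectedComponentIn_mono x (iInter_subset F i)).antisymm' ?_
  by_cases hx : x ∈ ⋂ i, F i
  · exact h.subset_connectedComponentIn
      (mem_iInter.2 fun i => mem_connectedComponentIn (mem_iInter.1 hx i))
      (iInter_mono fun i => connectedComponentIn_subset (F i) x)
  · obtain ⟨i, hi⟩ : ∃ i, x ∉ F i := by simpa using hx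
    calc ⋂ i, connectedComponentIn (F i) x ⊆ connectedComponentIn (F i) x := iInter_subset _ i
      _ = ∅ := connectedComponentIn_eq_empty hi
      _ ⊆ _ := empty_subset _

theorem iInter_compl_ball {X ι : Type*} [PseudoMetricSpace X] [Nonempty ι] (ρ : X)
    {r : ι → ℝ} (hr : BddAbove (range r)) :
    ⋂ i, (ball ρ (r i))ᶜ = (ball ρ (⨆ i, r i))ᶜ := by
  ext y
  simp [ciSup_le_iff hr]

theorem stmt12_general {E : Type*} [MetricSpace E] [CompactSpace E] (ρ : E)
    {ι : Type*} [Nonempty ι] (r : ι → ℝ) (C : ι → Set E)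
    (hC : ∀ i, ∃ x ∈ C i, C i = connectedComponentIn (Metric.ball ρ (r i))ᶜ x)
    (hchain : ∀ i j, C i ⊆ C j ∨ C j ⊆ C i) :
    (⋂ i, C i).Nonempty ∧ IsClosed (⋂ i, C i) ∧ IsConnected (⋂ i, C i) ∧
      ∃ x ∈ ⋂ i, C i,
        (⋂ i, C i) = connectedComponentIn (Metric.ball ρ (⨆ i, r i))ᶜ x := by
  have hcomp : ∀ i, ∀ y ∈ C i, C i = connectedComponentIn (ball ρ (r i))ᶜ y := fun i y hy => by
    obtain ⟨x, -, hx⟩ := hC i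
    rw [hx] at hy ⊢
    exact connectedComponentIn_eq hy
  have hclosed : ∀ i, IsClosed (C i) := fun i => by
    obtain ⟨x, -, hx⟩ := hC i
    exact hx ▸ isOpen_ball.isClosed_compl.connectedComponentIn x
  have hconn : ∀ i, IsConnected (C i) := fun i => by
    obtain ⟨x, hxC, hx⟩ := hC i
    rw [hx] at hxC ⊢
    exact isConnected_connectedComponentIn_iff.2 (connectedComponentIn_subset _ _ hxC)
  have hdir : Directed (· ⊇ ·) C := fun i j =>
    (hchain i j).elim (fun h => ⟨i, subset_rfl, h⟩) fun h => ⟨j, h, subset_rfl⟩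
  have hL := IsCompact.isConnected_iInter_of_directed (fun i => (hclosed i).isCompact) hconn hdir
  obtain ⟨x, hx⟩ := hL.nonempty
  have hCx : C = fun i => connectedComponentIn (ball ρ (r i))ᶜ x :=
    funext fun i => hcomp i x (mem_iInter.1 hx i)
  have hxF : ∀ i, x ∈ (ball ρ (r i))ᶜ := fun i =>
    connectedComponentIn_subset _ x (congrFun hCx i ▸ mem_iInter.1 hx i)
  have hbdd : BddAbove (range r) :=
    ⟨dist x ρ, forall_mem_range.2 fun i => by simpa using hxF i⟩
  refine ⟨hL.nonempty, isClosed_iInter hclosed, hL, x, hx, ?_⟩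
  rw [← iInter_compl_ball ρ hbdd, ← iInter_connectedComponentIn (hCx ▸ hL.isPreconnected),
    hCx]

/-- In a compact metric space, the intersection of a totally ordered (by inclusion) family
of nonempty closed connected sets, each a connected component of the complement of an open
ball `B(ρ, r i)`, is a nonempty closed connected set, equal to a connected component of the
complement of `B(ρ, sup r i)`. -/
theorem stmt12 {E : Type*} [MetricSpace E] [CompactSpace E] (ρ : E)
    {ι : Type*} [Nonempty ι] (r : ι → ℝ) (hr : ∀ i, 0 ≤ r i) (C : ι → Set E)
    (hC : ∀ i, ∃ x ∈ C i, C i = connectedComponentIn (Metric.ball ρ (r i))ᶜ x)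
    (hchain : ∀ i j, C i ⊆ C j ∨ C j ⊆ C i) :
    (⋂ i, C i).Nonempty ∧ IsClosed (⋂ i, C i) ∧ IsConnected (⋂ i, C i) ∧
      ∃ x ∈ ⋂ i, C i,
        (⋂ i, C i) = connectedComponentIn (Metric.ball ρ (⨆ i, r i))ᶜ x :=
  stmt12_general ρ r C hC hchain
end
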